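/- If G is a forest with n vertices, then the degree of the interlace polynomial q(G) equals n − μ(G), where μ(G) is the size of a maximum matching of G. -/

import Mathlib

/-- The pair `x, y` lies in different classes among (neighbors of `a` only,
neighbors of `b` only, neighbors of both), with both distinct from `a` and `b`. -/
def togglePair {V : Type} (G : SimpleGraph V) (a b x y : V) : Prop :=
  (x ≠ a ∧ x ≠ b ∧ y ≠ a ∧ y ≠ b) ∧
  (G.Adj a x ∨ G.Adj b x) ∧ (G.Adj a y ∨ G.Adj b y) ∧
  ¬((G.Adj a x ↔ G.Adj a y) ∧ (G.Adj b x ↔ G.Adj b y))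

lemma togglePair_comm {V : Type} (G : SimpleGraph V) (a b x y : V) :
    togglePair G a b x y ↔ togglePair G a b y x := by
  unfold togglePair; tauto

/-- The pivot `G^{ab}`: toggle the adjacency of every pair of vertices (distinct
from `a`, `b`) lying in different classes among (neighbors of `a` only,
neighbors of `b` only, neighbors of both); all other adjacencies unchanged. -/
def pivot {V : Type} (G : SimpleGraph V) (a b : V) : SimpleGraph V where
  Adj x y := (togglePair G a b x y ∧ x ≠ y ∧ ¬ G.Adj x y) ∨
    (¬ togglePair G a b x y ∧ G.Adj x y)
  symm := by
    refine ⟨fun x y h => ?_⟩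
    rcases h with ⟨ht, hxy, hna⟩ | ⟨ht, ha⟩
    · exact Or.inl ⟨(togglePair_comm G a b x y).mp ht, hxy.symm,
        fun h => hna h.symm⟩
    · exact Or.inr ⟨fun h => ht ((togglePair_comm G a b y x).mp h), ha.symm⟩
  loopless := by
    refine ⟨fun x h => ?_⟩
    rcases h with ⟨_, hxy, _⟩ | ⟨_, ha⟩
    · exact hxy rfl
    · exact G.irrefl ha

/-- Deletion of the vertex `a` from `G`. -/
def delVert {V : Type} (G : SimpleGraph V) (a : V) : SimpleGraph {v : V // v ≠ a} :=
  G.comap (fun v => v.1)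

/-- `q` is an interlace polynomial map: invariant under graph isomorphism,
satisfying the pivot-deletion recursion `q(G) = q(G-a) + q(G^{ab}-b)` for every
edge `ab`, and equal to `x^n` on the edgeless graph on `n` vertices. -/
def IsInterlacePoly
    (q : ∀ (V : Type) [Fintype V] [DecidableEq V], SimpleGraph V → Polynomial ℤ) : Prop :=
  (∀ (V W : Type) [Fintype V] [DecidableEq V] [Fintype W] [DecidableEq W]
      (G : SimpleGraph V) (H : SimpleGraph W), Nonempty (G ≃g H) → q V G = q W H) ∧
  (∀ (V : Type) [Fintype V] [DecidableEq V] (G : SimpleGraph V) (a b : V), G.Adj a b →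
      q V G = q {v : V // v ≠ a} (delVert G a) +
        q {v : V // v ≠ b} (delVert (pivot G a b) b)) ∧
  (∀ (V : Type) [Fintype V] [DecidableEq V],
      q V (⊥ : SimpleGraph V) = Polynomial.X ^ (Fintype.card V))


section Aux
open SimpleGraph Polynomial
set_option linter.unusedSectionVars false

variable {V : Type} [Fintype V] [DecidableEq V]

lemma edge_decomp {G : SimpleGraph V} {e : Sym2 V} {v : V}
    (he : e ∈ G.edgeSet) (hv : v ∈ e) : ∃ w, G.Adj v w ∧ e = s(v, w) := by
  induction e with
  | h x y =>
    rcases Sym2.mem_iff.mp hv with rfl | rfl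
    · exact ⟨y, he, rfl⟩
    · exact ⟨x, (G.mem_edgeSet.mp he).symm, Sym2.eq_swap⟩

def IsMatchingSet (G : SimpleGraph V) (s : Finset (Sym2 V)) : Prop :=
  ↑s ⊆ G.edgeSet ∧ (s : Set (Sym2 V)).Pairwise fun e f => ∀ v, v ∈ e → v ∉ f

open Classical in
noncomputable def matchNum (G : SimpleGraph V) : ℕ :=
  Nat.findGreatest (fun k => ∃ s : Finset (Sym2 V), IsMatchingSet G s ∧ s.card = k)
    (Fintype.card (Sym2 V))

lemma le_matchNum {G : SimpleGraph V} {s : Finset (Sym2 V)}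
    (hs : IsMatchingSet G s) : s.card ≤ matchNum G := by
  classical
  exact Nat.le_findGreatest (by simpa using Finset.card_le_card (Finset.subset_univ s))
    ⟨s, hs, rfl⟩

lemma exists_matchNum (G : SimpleGraph V) :
    ∃ s : Finset (Sym2 V), IsMatchingSet G s ∧ s.card = matchNum G := by
  classical
  exact Nat.findGreatest_spec (P := fun k => ∃ s : Finset (Sym2 V), IsMatchingSet G s ∧ s.card = k)
    (Nat.zero_le _) ⟨∅, ⟨by simp, by simp⟩, rfl⟩

lemma isMatchingSet_of_subgraph {G : SimpleGraph V} {M : G.Subgraph} (hM : M.IsMatching) :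
    ∃ s : Finset (Sym2 V), IsMatchingSet G s ∧ s.card = M.edgeSet.ncard := by
  have hfin : M.edgeSet.Finite := Set.toFinite _
  refine ⟨hfin.toFinset, ⟨?_, ?_⟩, (Set.ncard_eq_toFinset_card _ hfin).symm⟩
  · rw [Set.Finite.coe_toFinset]; exact M.edgeSet_subset
  · intro e he f hf hef v hve hvf
    rw [Finset.mem_coe, Set.Finite.mem_toFinset] at he hf
    obtain ⟨w, hw, rfl⟩ := edge_decomp (M.edgeSet_subset he) hve
    obtain ⟨w', hw', rfl⟩ := edge_decomp (M.edgeSet_subset hf) hvf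
    rw [SimpleGraph.Subgraph.mem_edgeSet] at he hf
    obtain ⟨u, -, hu⟩ := hM (M.edge_vert he)
    exact hef (by rw [hu w he, hu w' hf])

/-- The subgraph built from a matching set. -/
def msSubgraph (G : SimpleGraph V) (s : Finset (Sym2 V)) (hsub : ↑s ⊆ G.edgeSet) :
    G.Subgraph where
  verts := {v | ∃ e ∈ s, v ∈ e}
  Adj v w := s(v, w) ∈ s
  adj_sub h := hsub h
  edge_vert h := ⟨_, h, Sym2.mem_mk_left _ _⟩
  symm := ⟨fun v w h => by show s(w,v) ∈ s; rwa [Sym2.eq_swap]⟩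

lemma subgraph_of_matchingSet {G : SimpleGraph V} {s : Finset (Sym2 V)}
    (hs : IsMatchingSet G s) :
    ∃ M : G.Subgraph, M.IsMatching ∧ M.edgeSet.ncard = s.card := by
  obtain ⟨hsub, hdisj⟩ := hs
  refine ⟨msSubgraph G s hsub, ?_, ?_⟩
  · rintro v ⟨e, he, hve⟩
    obtain ⟨w, hw, rfl⟩ := edge_decomp (hsub he) hve
    refine ⟨w, he, fun y hy => ?_⟩
    by_contra hne
    have heq : s(v, y) = s(v, w) := by
      by_contra hne2
      exact hdisj hy he hne2 v (Sym2.mem_mk_left _ _) (Sym2.mem_mk_left _ _)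
    rcases Sym2.eq_iff.mp heq with ⟨-, h2⟩ | ⟨-, h2⟩
    · exact hne h2
    · exact (G.mem_edgeSet.mp (hsub hy)).ne h2.symm
  · have : (msSubgraph G s hsub).edgeSet = ↑s := by
      ext e
      induction e with
      | h x y => simp [SimpleGraph.Subgraph.mem_edgeSet, msSubgraph]
    rw [this, Set.ncard_coe_finset]

section trans
variable {G : SimpleGraph V} {a : V}

lemma injF : Function.Injective (Sym2.map (Subtype.val : {v : V // v ≠ a} → V)) :=
  Sym2.map.injective Subtype.val_injective

/-- Pushforward of a matching set of `delVert G a`. -/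
lemma push_matchingSet {s' : Finset (Sym2 {v : V // v ≠ a})}
    (hs' : IsMatchingSet (delVert G a) s') :
    IsMatchingSet G (s'.image (Sym2.map Subtype.val)) ∧
      (s'.image (Sym2.map Subtype.val)).card = s'.card ∧
      ∀ e ∈ s'.image (Sym2.map Subtype.val), a ∉ e := by
  obtain ⟨hsub, hdisj⟩ := hs'
  have hmem : ∀ e' : Sym2 {v : V // v ≠ a}, ∀ v : V, v ∈ Sym2.map Subtype.val e' →
      ∃ x : {v : V // v ≠ a}, x ∈ e' ∧ x.1 = v := by
    intro e' v hv
    obtain ⟨x, hx, hxv⟩ := Sym2.mem_map.mp hv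
    exact ⟨x, hx, hxv⟩
  refine ⟨⟨?_, ?_⟩, Finset.card_image_of_injective _ injF, ?_⟩
  · intro e he
    rw [Finset.coe_image] at he
    obtain ⟨e', he', rfl⟩ := he
    induction e' with
    | h x y => exact hsub he'
  · intro e he f hf hef v hve hvf
    rw [Finset.coe_image] at he hf
    obtain ⟨e', he', rfl⟩ := he
    obtain ⟨f', hf', rfl⟩ := hf
    obtain ⟨x, hx, hxv⟩ := hmem e' v hve
    obtain ⟨y, hy, hyv⟩ := hmem f' v hvf
    have : x = y := Subtype.val_injective (hxv.trans hyv.symm)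
    subst this
    exact hdisj he' hf' (fun h => hef (by rw [h])) x hx hy
  · intro e he
    rw [Finset.mem_image] at he
    obtain ⟨e', -, rfl⟩ := he
    intro ha
    obtain ⟨x, -, hxa⟩ := hmem e' a ha
    exact x.2 hxa

/-- Pullback of a matching set of `G` avoiding `a`. -/
lemma pull_matchingSet {s : Finset (Sym2 V)} (hs : IsMatchingSet G s)
    (havoid : ∀ e ∈ s, a ∉ e) :
    ∃ s' : Finset (Sym2 {v : V // v ≠ a}),
      IsMatchingSet (delVert G a) s' ∧ s'.card = s.card := by
  classical
  have hrange : ∀ e ∈ s, e ∈ Set.range (Sym2.map (Subtype.val : {v : V // v ≠ a} → V)) := by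
    intro e he
    induction e with
    | h x y =>
      have hx : x ≠ a := fun h => havoid _ he (h ▸ Sym2.mem_mk_left x y)
      have hy : y ≠ a := fun h => havoid _ he (h ▸ Sym2.mem_mk_right x y)
      exact ⟨s(⟨x, hx⟩, ⟨y, hy⟩), rfl⟩
  refine ⟨s.preimage (Sym2.map Subtype.val) (injF.injOn), ⟨?_, ?_⟩, ?_⟩
  · intro e' he'
    rw [Finset.coe_preimage] at he'
    have := hs.1 he'
    induction e' with
    | h x y => exact this
  · intro e' he' f' hf' hef v hve hvf
    rw [Finset.coe_preimage] at he' hf'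
    exact hs.2 he' hf' (fun h => hef (injF h)) v.1
      (Sym2.mem_map.mpr ⟨v, hve, rfl⟩) (Sym2.mem_map.mpr ⟨v, hvf, rfl⟩)
  · rw [← Finset.card_image_of_injective _ injF, Finset.image_preimage,
      Finset.filter_true_of_mem hrange]
end trans

section ineq
variable {G : SimpleGraph V} {a b : V}

lemma matchNum_le_delVert_add_one : matchNum G ≤ matchNum (delVert G a) + 1 := by
  classical
  obtain ⟨s, hs, hcard⟩ := exists_matchNum G
  set t := s.filter (fun e => a ∉ e) with ht
  have havoid : ∀ e ∈ t, a ∉ e := fun e he => (Finset.mem_filter.mp he).2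
  obtain ⟨s', hs', hcard'⟩ := pull_matchingSet
    ⟨fun e he => hs.1 (Finset.filter_subset _ _ he),
      hs.2.mono (Finset.coe_subset.mpr (Finset.filter_subset _ _))⟩
    havoid
  have h1 : (s.filter (fun e => a ∈ e)).card ≤ 1 := by
    rw [Finset.card_le_one]
    intro e he f hf
    rw [Finset.mem_filter] at he hf
    by_contra hef
    exact hs.2 he.1 hf.1 hef a he.2 hf.2
  have h2 : s.card ≤ t.card + 1 := by
    rw [ht]
    have := Finset.card_filter_add_card_filter_not (s := s) (p := fun e => a ∈ e)
    omega
  calc matchNum G = s.card := hcard.symm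
    _ ≤ t.card + 1 := h2
    _ = s'.card + 1 := by rw [hcard']
    _ ≤ matchNum (delVert G a) + 1 := Nat.add_le_add_right (le_matchNum hs') 1

lemma matchNum_delVert_le : matchNum (delVert G a) ≤ matchNum G := by
  obtain ⟨s', hs', hcard'⟩ := exists_matchNum (delVert G a)
  obtain ⟨hpush, hpcard, -⟩ := push_matchingSet hs'
  calc matchNum (delVert G a) = s'.card := hcard'.symm
    _ = (s'.image (Sym2.map Subtype.val)).card := hpcard.symm
    _ ≤ matchNum G := le_matchNum hpush

lemma matchNum_eq_delVert_add_one (hab : G.Adj a b) (hleaf : ∀ x, G.Adj b x → x = a) :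
    matchNum G = matchNum (delVert G a) + 1 := by
  refine le_antisymm matchNum_le_delVert_add_one ?_
  classical
  obtain ⟨s', hs', hcard'⟩ := exists_matchNum (delVert G a)
  obtain ⟨hpush, hpcard, havoid⟩ := push_matchingSet hs'
  set t := s'.image (Sym2.map Subtype.val) with ht
  have hbavoid : ∀ e ∈ t, b ∉ e := by
    intro e he hbe
    obtain ⟨w, hw, rfl⟩ := edge_decomp (hpush.1 he) hbe
    have := hleaf w hw
    subst this
    exact havoid _ he (Sym2.mem_mk_right _ _)
  have hnotmem : s(a, b) ∉ t := fun h => havoid _ h (Sym2.mem_mk_left _ _)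
  have hins : IsMatchingSet G (insert s(a, b) t) := by
    constructor
    · rw [Finset.coe_insert]
      exact Set.insert_subset (G.mem_edgeSet.mpr hab) hpush.1
    · rw [Finset.coe_insert]
      refine Set.pairwise_insert.mpr ⟨hpush.2, ?_⟩
      intro e he hne
      have hkey : ∀ v, v ∈ s(a, b) → v ∉ e := by
        intro v hv
        rcases Sym2.mem_iff.mp hv with rfl | rfl
        · exact havoid _ he
        · exact hbavoid _ he
      exact ⟨hkey, fun v hv hv' => hkey v hv' hv⟩
  have := le_matchNum hins
  rw [Finset.card_insert_of_notMem hnotmem, hpcard, hcard'] at this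
  omega

lemma matchNum_bot : matchNum (⊥ : SimpleGraph V) = 0 := by
  obtain ⟨s, ⟨hsub, -⟩, hcard⟩ := exists_matchNum (⊥ : SimpleGraph V)
  rw [← hcard, Finset.card_eq_zero, Finset.eq_empty_iff_forall_notMem]
  intro e he
  simpa using hsub he
end ineq

lemma pivot_eq_of_leaf {G : SimpleGraph V} {a b : V} (hleaf : ∀ x, G.Adj b x → x = a) :
    pivot G a b = G := by
  have hnt : ∀ x y, ¬ togglePair G a b x y := by
    rintro x y ⟨⟨hxa, hxb, hya, hyb⟩, h1, h2, h3⟩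
    have hbx : ¬ G.Adj b x := fun h => hxa (hleaf x h)
    have hby : ¬ G.Adj b y := fun h => hya (hleaf y h)
    have hax : G.Adj a x := h1.resolve_right hbx
    have hay : G.Adj a y := h2.resolve_right hby
    exact h3 ⟨iff_of_true hax hay, iff_of_false hbx hby⟩
  ext x y
  show ((togglePair G a b x y ∧ _ ∧ _) ∨ (¬ togglePair G a b x y ∧ G.Adj x y)) ↔ G.Adj x y
  constructor
  · rintro (⟨ht, -, -⟩ | ⟨-, h⟩)
    · exact absurd ht (hnt x y)
    · exact h
  · intro h; exact Or.inr ⟨hnt x y, h⟩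

lemma delVert_isAcyclic {G : SimpleGraph V} {a : V} (h : G.IsAcyclic) :
    (delVert G a).IsAcyclic := by
  intro v c hc
  exact h ((c.map (SimpleGraph.Embedding.comap
    ⟨Subtype.val, Subtype.val_injective⟩ G).toHom)) (hc.map Subtype.val_injective)

lemma card_delVert (a : V) : Fintype.card {v : V // v ≠ a} = Fintype.card V - 1 := by
  have := Fintype.card_subtype_compl (fun x : V => x = a)
  rw [Fintype.card_subtype_eq] at this
  exact this

lemma exists_leaf (G : SimpleGraph V) (hG : G.IsAcyclic) {x y : V} (hxy : G.Adj x y) :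
    ∃ a b, G.Adj a b ∧ ∀ z, G.Adj b z → z = a := by
  classical
  set P : ℕ → Prop := fun k => ∃ (u v : V) (p : G.Walk u v), p.IsPath ∧ p.length = k with hP
  have hP1 : P 1 := ⟨x, y, (SimpleGraph.Path.singleton hxy).1,
    (SimpleGraph.Path.singleton hxy).2, rfl⟩
  have hcard : 1 ≤ Fintype.card V := Fintype.card_pos_iff.mpr ⟨x⟩
  set N := Nat.findGreatest P (Fintype.card V) with hN
  have hPN : P N := Nat.findGreatest_spec hcard hP1
  obtain ⟨u, v, p, hp, hlen⟩ := hPN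
  have hN1 : 1 ≤ N := Nat.le_findGreatest hcard hP1
  cases p with
  | nil => simp at hlen; omega
  | @cons _ w _ h q =>
    rw [SimpleGraph.Walk.cons_isPath_iff] at hp
    refine ⟨w, u, h.symm, fun z hz => ?_⟩
    by_cases hmem : z ∈ (SimpleGraph.Walk.cons h q).support
    · have hpz : ((SimpleGraph.Walk.cons h q).takeUntil z hmem).IsPath :=
        (SimpleGraph.Walk.cons_isPath_iff h q |>.mpr hp).takeUntil hmem
      have hequ : (⟨_, hpz⟩ : G.Path u z) = SimpleGraph.Path.singleton hz :=
        hG.path_unique _ _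
      have hedge : s(u, z) ∈ ((SimpleGraph.Walk.cons h q).takeUntil z hmem).edges := by
        have := congrArg (fun P : G.Path u z => P.1.edges) hequ
        simp only [SimpleGraph.Path.singleton] at this
        rw [this]
        simp
      have hedge2 : s(u, z) ∈ (SimpleGraph.Walk.cons h q).edges :=
        SimpleGraph.Walk.edges_takeUntil_subset _ hmem hedge
      rw [SimpleGraph.Walk.edges_cons, List.mem_cons] at hedge2
      rcases hedge2 with heq | hmem2
      · rcases Sym2.eq_iff.mp heq with ⟨-, h2⟩ | ⟨-, h2⟩
        · exact h2
        · exact absurd h2 hz.ne'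
      · exact absurd (SimpleGraph.Walk.fst_mem_support_of_mem_edges q hmem2) hp.2
    · exfalso
      have hp' : (SimpleGraph.Walk.cons hz.symm (SimpleGraph.Walk.cons h q)).IsPath := by
        rw [SimpleGraph.Walk.cons_isPath_iff]
        exact ⟨SimpleGraph.Walk.cons_isPath_iff h q |>.mpr hp, hmem⟩
      have hlt : (SimpleGraph.Walk.cons hz.symm (SimpleGraph.Walk.cons h q)).length <
          Fintype.card V := hp'.length_lt
      have : N + 1 ≤ N := by
        apply Nat.le_findGreatest
        · simp only [SimpleGraph.Walk.length_cons] at hlt hlen ⊢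
          omega
        · exact ⟨z, v, _, hp', by simp [hlen]⟩
      omega

lemma natDegree_add_eq_left' {p r : Polynomial ℤ}
    (hp : ∀ k, 0 ≤ p.coeff k) (hr : ∀ k, 0 ≤ r.coeff k) (hp0 : p ≠ 0)
    (h : r.natDegree ≤ p.natDegree) : (p + r).natDegree = p.natDegree := by
  refine le_antisymm (Polynomial.natDegree_add_le_of_degree_le le_rfl h) ?_
  apply Polynomial.le_natDegree_of_ne_zero
  rw [Polynomial.coeff_add]
  have h1 : 0 < p.coeff p.natDegree := lt_of_le_of_ne (hp _)
    (Ne.symm (Polynomial.leadingCoeff_ne_zero.mpr hp0))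
  have h2 : 0 ≤ r.coeff p.natDegree := hr _
  omega

end Aux

section QAux
open Polynomial

lemma eq_bot_of_no_adj {V : Type} (G : SimpleGraph V) (h : ¬ ∃ a b, G.Adj a b) :
    G = ⊥ := by
  ext a b
  simp only [SimpleGraph.bot_adj, iff_false]
  exact fun hab => h ⟨a, b, hab⟩

lemma q_pos (q : ∀ (V : Type) [Fintype V] [DecidableEq V], SimpleGraph V → Polynomial ℤ)
    (hq : IsInterlacePoly q) :
    ∀ (n : ℕ) (V : Type) [Fintype V] [DecidableEq V] (G : SimpleGraph V),
      Fintype.card V ≤ n → (∀ k, 0 ≤ (q V G).coeff k) ∧ 0 < (q V G).eval 1 := by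
  intro n
  induction n with
  | zero =>
    intro V _ _ G hcard
    have hemp : IsEmpty V := Fintype.card_eq_zero_iff.mp (Nat.le_zero.mp hcard)
    have hbot : G = ⊥ := eq_bot_of_no_adj G (fun ⟨a, _, _⟩ => hemp.elim a)
    rw [hbot, hq.2.2]
    refine ⟨fun k => ?_, by simp⟩
    rw [Polynomial.coeff_X_pow]
    split <;> norm_num
  | succ n ih =>
    intro V _ _ G hcard
    by_cases hedge : ∃ a b, G.Adj a b
    · obtain ⟨a, b, hab⟩ := hedge
      rw [hq.2.1 V G a b hab]
      have hca : Fintype.card {v : V // v ≠ a} ≤ n := by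
        rw [card_delVert]
        have : 1 ≤ Fintype.card V := Fintype.card_pos_iff.mpr ⟨a⟩
        omega
      have hcb : Fintype.card {v : V // v ≠ b} ≤ n := by
        rw [card_delVert]
        have : 1 ≤ Fintype.card V := Fintype.card_pos_iff.mpr ⟨a⟩
        omega
      obtain ⟨h1, h2⟩ := ih _ (delVert G a) hca
      obtain ⟨h3, h4⟩ := ih _ (delVert (pivot G a b) b) hcb
      refine ⟨fun k => ?_, ?_⟩
      · rw [Polynomial.coeff_add]
        exact add_nonneg (h1 k) (h3 k)
      · rw [Polynomial.eval_add]
        exact add_pos h2 h4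
    · have hbot : G = ⊥ := eq_bot_of_no_adj G hedge
      rw [hbot, hq.2.2]
      refine ⟨fun k => ?_, by simp⟩
      rw [Polynomial.coeff_X_pow]
      split <;> norm_num

lemma q_degree (q : ∀ (V : Type) [Fintype V] [DecidableEq V], SimpleGraph V → Polynomial ℤ)
    (hq : IsInterlacePoly q) :
    ∀ (n : ℕ) (V : Type) [Fintype V] [DecidableEq V] (G : SimpleGraph V),
      Fintype.card V ≤ n → G.IsAcyclic →
      (q V G).natDegree = Fintype.card V - matchNum G := by
  intro n
  induction n with
  | zero =>
    intro V _ _ G hcard _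
    have hemp : IsEmpty V := Fintype.card_eq_zero_iff.mp (Nat.le_zero.mp hcard)
    have hbot : G = ⊥ := eq_bot_of_no_adj G (fun ⟨a, _, _⟩ => hemp.elim a)
    rw [hbot, hq.2.2, matchNum_bot, Polynomial.natDegree_X_pow, Nat.sub_zero]
  | succ n ih =>
    intro V _ _ G hcard hacyc
    by_cases hedge : ∃ x y, G.Adj x y
    · obtain ⟨x, y, hxy⟩ := hedge
      obtain ⟨a, b, hab, hleaf⟩ := exists_leaf G hacyc hxy
      rw [hq.2.1 V G a b hab, pivot_eq_of_leaf hleaf]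
      have hn1 : 1 ≤ Fintype.card V := Fintype.card_pos_iff.mpr ⟨a⟩
      have hca : Fintype.card {v : V // v ≠ a} ≤ n := by rw [card_delVert]; omega
      have hcb : Fintype.card {v : V // v ≠ b} ≤ n := by rw [card_delVert]; omega
      have ih1 := ih _ (delVert G a) hca (delVert_isAcyclic hacyc)
      have ih2 := ih _ (delVert G b) hcb (delVert_isAcyclic hacyc)
      have hμ : matchNum G = matchNum (delVert G a) + 1 :=
        matchNum_eq_delVert_add_one hab hleaf
      have hμb : matchNum G ≤ matchNum (delVert G b) + 1 :=
        matchNum_le_delVert_add_one (a := b)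
      obtain ⟨hco1, hev1⟩ := q_pos q hq n _ (delVert G a) hca
      obtain ⟨hco2, hev2⟩ := q_pos q hq n _ (delVert G b) hcb
      have hp0 : q {v : V // v ≠ a} (delVert G a) ≠ 0 := by
        intro h
        rw [h] at hev1
        simp at hev1
      have hle : (q {v : V // v ≠ b} (delVert G b)).natDegree ≤
          (q {v : V // v ≠ a} (delVert G a)).natDegree := by
        rw [ih1, ih2, card_delVert, card_delVert]
        have : matchNum (delVert G a) ≤ matchNum (delVert G b) := by omega
        omega
      rw [natDegree_add_eq_left' hco1 hco2 hp0 hle, ih1, card_delVert]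
      omega
    · have hbot : G = ⊥ := eq_bot_of_no_adj G hedge
      rw [hbot, hq.2.2, matchNum_bot, Polynomial.natDegree_X_pow, Nat.sub_zero]

end QAux

theorem interlacePoly_degree_of_forest
    (q : ∀ (V : Type) [Fintype V] [DecidableEq V], SimpleGraph V → Polynomial ℤ)
    (hq : IsInterlacePoly q)
    {V : Type} [Fintype V] [DecidableEq V] (G : SimpleGraph V)
    (hforest : G.IsAcyclic) (m : ℕ) (M : G.Subgraph)
    (hM : M.IsMatching) (hMcard : M.edgeSet.ncard = m)
    (hmax : ∀ N : G.Subgraph, N.IsMatching → N.edgeSet.ncard ≤ m) :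
    (q V G).natDegree = Fintype.card V - m := by
  have hm : matchNum G = m := by
    refine le_antisymm ?_ ?_
    · obtain ⟨s, hs, hcard⟩ := exists_matchNum G
      obtain ⟨N, hN, hNcard⟩ := subgraph_of_matchingSet hs
      have := hmax N hN
      omega
    · obtain ⟨s, hs, hcard⟩ := isMatchingSet_of_subgraph hM
      have := le_matchNum hs
      omega
  have := q_degree q hq (Fintype.card V) V G le_rfl hforest
  rw [hm] at this
  exact this
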